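/- For every λ ≥ 0 and h ≥ 0, the annealed free energy exists and equals lim_{N→∞} (1/N) log 𝔼 Z_{N,ω}(λ,h) = 2λ(λ − h) if h < λ, and = 0 if h ≥ λ. -/

import Mathlib

/-!
The excursion weight `cw lam h ω a b` depends only on `ω (a+1), …, ω b` and `Zpart K lam h ω j`
only on `ω 1, …, ω j`, so the two factors of each term of the renewal recursion are independent.
With `c = 2λ(λ-h)`, the Gaussian moment generating function gives `𝔼 cw = (1 + e^{c n})/2` for an
excursion of length `n`, so `𝔼 Z_N` is a deterministic renewal sequence. As
`e^{c⁺n}/2 ≤ (1 + e^{c n})/2 ≤ e^{c⁺n}` and `∑ K ≤ 1`, induction gives `𝔼 Z_N ≤ e^{c⁺N}`, while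
the single-excursion configuration gives `𝔼 Z_N ≥ K(N) e^{c⁺N}/2`. The power-law tail of `K`
makes `(log K(N))/N → 0`, and `c⁺` is the claimed limit because `λ ≥ 0`.
-/

open MeasureTheory ProbabilityTheory Filter Finset

/-- The Boltzmann weight `(1 + exp(-2λh(b-a) - 2λ Σ_{i=a+1}^b ω_i))/2`
of a single copolymer excursion from `a` to `b`. -/
noncomputable def cw (lam h : ℝ) (ω : ℕ → ℝ) (a b : ℕ) : ℝ :=
  (1 + Real.exp (-(2 * lam * h * ((b : ℝ) - (a : ℝ)))
      - 2 * lam * ∑ i ∈ Finset.Icc (a + 1) b, ω i)) / 2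

/-- The copolymer partition function `Z_{N,ω}(λ,h)`: summing over the position `j`
of the last renewal point before `N` reproduces the sum over all renewal
configurations `0 = t_0 < t_1 < ⋯ < t_m = N` of `∏_r K(t_r - t_{r-1}) ·
(1+exp(-2λh(t_r-t_{r-1}) - 2λ Σ ω_i))/2`. -/
noncomputable def Zpart (K : ℕ → ℝ) (lam h : ℝ) (ω : ℕ → ℝ) : ℕ → ℝ
  | 0 => 1
  | N + 1 => ∑ j ∈ (Finset.range (N + 1)).attach,
      Zpart K lam h ω j.1 * K (N + 1 - j.1) * cw lam h ω j.1 (N + 1)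
  decreasing_by exact Finset.mem_range.mp j.2

/-- `P` is the joint law of an IID sequence of standard Gaussian random variables:
a probability measure on `ℕ → ℝ` under which the coordinates are independent,
each with law `gaussianReal 0 1`. -/
def IsGaussianDisorder (P : Measure (ℕ → ℝ)) : Prop :=
  IsProbabilityMeasure P ∧
    iIndepFun (fun i ω => ω i) P ∧
    ∀ i : ℕ, P.map (fun ω => ω i) = gaussianReal 0 1

theorem DependsOn.comp_updateFinset_restrict {ι γ : Type*} {β : ι → Type*} [DecidableEq ι]
    {f : (Π i, β i) → γ} {s : Finset ι} (hf : DependsOn f s) (x : Π i, β i) :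
    (fun y => f (Function.updateFinset x s y)) ∘ s.restrict = f :=
  funext fun _ => hf fun i hi => by simp [Function.updateFinset, Finset.mem_coe.mp hi]

theorem ProbabilityTheory.iIndepFun.indepFun_of_dependsOn {ι γ δ : Type*} {β : ι → Type*}
    [∀ i, MeasurableSpace (β i)] [∀ i, Nonempty (β i)]
    [MeasurableSpace γ] [MeasurableSpace δ]
    {P : Measure (Π i, β i)} (hP : iIndepFun (fun i ω => ω i) P)
    {f : (Π i, β i) → γ} {g : (Π i, β i) → δ} {S T : Finset ι} (hST : Disjoint S T)
    (hf : Measurable f) (hg : Measurable g) (hfS : DependsOn f S) (hgT : DependsOn g T) :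
    IndepFun f g P := by
  classical
  let x : Π i, β i := fun _ => Classical.arbitrary _
  have h := (hP.indepFun_finset S T hST measurable_pi_apply).comp
    (hf.comp (measurable_updateFinset (x := x))) (hg.comp (measurable_updateFinset (x := x)))
  rwa [← hfS.comp_updateFinset_restrict x, ← hgT.comp_updateFinset_restrict x]

section Asymptotics

open Topology

theorem eventually_pos_of_tendsto_rpow_mul {u : ℕ → ℝ} {p C : ℝ} (hC : 0 < C)
    (hu : Tendsto (fun n : ℕ => (n : ℝ) ^ p * u n) atTop (𝓝 C)) : ∀ᶠ n in atTop, 0 < u n := by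
  filter_upwards [hu.eventually (eventually_gt_nhds hC)] with n hn
  exact pos_of_mul_pos_right hn (Real.rpow_nonneg n.cast_nonneg p)

theorem tendsto_inv_mul_log_of_tendsto_rpow_mul {u : ℕ → ℝ} {p C : ℝ} (hC : 0 < C)
    (hu : Tendsto (fun n : ℕ => (n : ℝ) ^ p * u n) atTop (𝓝 C)) :
    Tendsto (fun n : ℕ => (n : ℝ)⁻¹ * Real.log (u n)) atTop (𝓝 0) := by
  have hlog_rpow_mul : Tendsto (fun n : ℕ => (n : ℝ)⁻¹ * Real.log ((n : ℝ) ^ p * u n))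
      atTop (𝓝 0) := by
    simpa using tendsto_inv_atTop_nhds_zero_nat.mul (hu.log hC.ne')
  have hlog : Tendsto (fun n : ℕ => (n : ℝ)⁻¹ * Real.log n) atTop (𝓝 0) := by
    refine ((Real.tendsto_pow_log_div_mul_add_atTop 1 0 1 one_ne_zero).comp
      tendsto_natCast_atTop_atTop).congr fun n => ?_
    simp [div_eq_inv_mul]
  have hdiff : Tendsto (fun n : ℕ => (n : ℝ)⁻¹ * Real.log ((n : ℝ) ^ p * u n)
      - p * ((n : ℝ)⁻¹ * Real.log n)) atTop (𝓝 0) := by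
    simpa using hlog_rpow_mul.sub (hlog.const_mul p)
  refine hdiff.congr' ?_
  filter_upwards [eventually_pos_of_tendsto_rpow_mul hC hu, eventually_gt_atTop 0] with n hun hn
  have hn : (0 : ℝ) < n := Nat.cast_pos.mpr hn
  rw [Real.log_mul (Real.rpow_pos_of_pos hn p).ne' hun.ne', Real.log_rpow hn]
  ring

theorem tendsto_inv_mul_log_of_le_of_le {a b : ℕ → ℝ} {c : ℝ}
    (hb : Tendsto (fun n : ℕ => (n : ℝ)⁻¹ * Real.log (b n)) atTop (𝓝 0))
    (hb_pos : ∀ᶠ n in atTop, 0 < b n)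
    (hlower : ∀ᶠ n : ℕ in atTop, b n * Real.exp (c * n) ≤ a n)
    (hupper : ∀ᶠ n : ℕ in atTop, a n ≤ Real.exp (c * n)) :
    Tendsto (fun n : ℕ => (n : ℝ)⁻¹ * Real.log (a n)) atTop (𝓝 c) := by
  refine tendsto_of_tendsto_of_tendsto_of_le_of_le' (by simpa using hb.add_const c)
    tendsto_const_nhds ?_ ?_
  · filter_upwards [hb_pos, hlower, eventually_gt_atTop 0] with n hbn hlower hn
    have hlog : Real.log (b n) + c * n ≤ Real.log (a n) := by
      rw [← Real.log_exp (c * n), ← Real.log_mul hbn.ne' (Real.exp_pos _).ne']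
      exact Real.log_le_log (by positivity) hlower
    calc (n : ℝ)⁻¹ * Real.log (b n) + c = (n : ℝ)⁻¹ * (Real.log (b n) + c * n) := by
          field_simp
      _ ≤ (n : ℝ)⁻¹ * Real.log (a n) := by gcongr
  · filter_upwards [hb_pos, hlower, hupper, eventually_gt_atTop 0] with n hbn hlower hupper hn
    have hlog : Real.log (a n) ≤ c * n := by
      rw [← Real.log_exp (c * n)]
      exact Real.log_le_log (lt_of_lt_of_le (by positivity) hlower) hupper
    calc (n : ℝ)⁻¹ * Real.log (a n) ≤ (n : ℝ)⁻¹ * (c * n) := by gcongr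
      _ = c := by field_simp

end Asymptotics

section Renewal

variable {K : ℕ → ℝ}

theorem sum_range_sub_le_of_hasSum (hK : ∀ n, 0 ≤ K n) (hKsum : HasSum K 1) (N : ℕ) :
    ∑ j ∈ Finset.range N, K (N - j) ≤ 1 :=
  calc ∑ j ∈ Finset.range N, K (N - j) = ∑ j ∈ Finset.range N, K (j + 1) := by
        rw [← Finset.sum_range_reflect]
        exact Finset.sum_congr rfl fun j hj => by
          have := Finset.mem_range.mp hj
          congr 1
          omega
    _ ≤ ∑ j ∈ Finset.range (N + 1), K j := by
        rw [Finset.sum_range_succ']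
        linarith [hK 0]
    _ ≤ 1 := sum_le_hasSum _ (fun i _ => hK i) hKsum

theorem le_exp_mul_of_renewal {A w : ℕ → ℝ} {c : ℝ} (hK : ∀ n, 0 ≤ K n) (hKsum : HasSum K 1)
    (hw_nonneg : ∀ n, 0 ≤ w n) (hw : ∀ n, w n ≤ Real.exp (c * n)) (hA_zero : A 0 ≤ 1)
    (hA_succ : ∀ N, A (N + 1) =
      ∑ j ∈ Finset.range (N + 1), A j * K (N + 1 - j) * w (N + 1 - j))
    (N : ℕ) : A N ≤ Real.exp (c * N) := by
  induction N using Nat.strong_induction_on with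
  | _ N ih =>
    rcases N with _ | N
    · simpa using hA_zero
    · have hterm : ∀ j ∈ Finset.range (N + 1), A j * K (N + 1 - j) * w (N + 1 - j) ≤
          Real.exp (c * ↑(N + 1)) * K (N + 1 - j) := fun j hj => by
        have hj := Finset.mem_range.mp hj
        calc A j * K (N + 1 - j) * w (N + 1 - j)
            ≤ Real.exp (c * j) * K (N + 1 - j) * Real.exp (c * ↑(N + 1 - j)) := by
              gcongr
              exacts [hw_nonneg _, mul_nonneg (Real.exp_nonneg _) (hK _), hK _, ih j hj, hw _]
          _ = Real.exp (c * ↑(N + 1)) * K (N + 1 - j) := by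
              rw [mul_right_comm, ← Real.exp_add, Nat.cast_sub hj.le]
              ring_nf
      calc A (N + 1) ≤ ∑ j ∈ Finset.range (N + 1), Real.exp (c * ↑(N + 1)) * K (N + 1 - j) :=
            (hA_succ N).trans_le (Finset.sum_le_sum hterm)
        _ ≤ Real.exp (c * ↑(N + 1)) := by
            rw [← Finset.mul_sum]
            exact mul_le_of_le_one_right (Real.exp_nonneg _)
              (sum_range_sub_le_of_hasSum hK hKsum (N + 1))

end Renewal

theorem one_add_exp_div_two_le_exp_max (c : ℝ) {x : ℝ} (hx : 0 ≤ x) :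
    (1 + Real.exp (c * x)) / 2 ≤ Real.exp (max c 0 * x) := by
  have h1 : 1 ≤ Real.exp (max c 0 * x) := Real.one_le_exp (mul_nonneg (le_max_right c 0) hx)
  have h2 : Real.exp (c * x) ≤ Real.exp (max c 0 * x) := by gcongr; exact le_max_left c 0
  linarith

theorem exp_max_div_two_le_one_add_exp (c x : ℝ) :
    Real.exp (max c 0 * x) / 2 ≤ (1 + Real.exp (c * x)) / 2 := by
  rcases le_total c 0 with hc | hc
  · rw [max_eq_right hc, zero_mul, Real.exp_zero]
    linarith [Real.exp_pos (c * x)]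
  · rw [max_eq_left hc]
    linarith

section Weights

variable (lam h : ℝ)

theorem cw_nonneg (ω : ℕ → ℝ) (a b : ℕ) : 0 ≤ cw lam h ω a b := by
  unfold cw
  positivity

theorem measurable_cw (a b : ℕ) : Measurable fun ω => cw lam h ω a b := by
  unfold cw
  fun_prop

theorem dependsOn_cw (a b : ℕ) : DependsOn (fun ω => cw lam h ω a b) (Finset.Icc (a + 1) b) :=
  fun _ _ hω => by simp only [cw, Finset.sum_congr rfl fun i hi => hω i (Finset.mem_coe.mpr hi)]

theorem cw_eq (ω : ℕ → ℝ) (a b : ℕ) :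
    cw lam h ω a b = (1 + Real.exp (-(2 * lam * h * ((b : ℝ) - a)))
      * Real.exp (-(2 * lam) * ∑ i ∈ Finset.Icc (a + 1) b, ω i)) / 2 := by
  rw [cw, ← Real.exp_add]
  ring_nf

end Weights

section PartitionFunction

variable (K : ℕ → ℝ) (lam h : ℝ)

theorem Zpart_zero (ω : ℕ → ℝ) : Zpart K lam h ω 0 = 1 := by
  rw [Zpart]

theorem Zpart_succ (ω : ℕ → ℝ) (N : ℕ) :
    Zpart K lam h ω (N + 1) =
      ∑ j ∈ Finset.range (N + 1), Zpart K lam h ω j * K (N + 1 - j) * cw lam h ω j (N + 1) := by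
  rw [Zpart]
  exact Finset.sum_attach (Finset.range (N + 1))
    fun j => Zpart K lam h ω j * K (N + 1 - j) * cw lam h ω j (N + 1)

theorem Zpart_nonneg (hK : ∀ n, 0 ≤ K n) (ω : ℕ → ℝ) (N : ℕ) : 0 ≤ Zpart K lam h ω N := by
  induction N using Nat.strong_induction_on with
  | _ N ih =>
    rcases N with _ | N
    · simp [Zpart_zero]
    · rw [Zpart_succ]
      exact Finset.sum_nonneg fun j hj =>
        mul_nonneg (mul_nonneg (ih j (Finset.mem_range.mp hj)) (hK _)) (cw_nonneg lam h ω _ _)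

theorem measurable_Zpart (N : ℕ) : Measurable fun ω => Zpart K lam h ω N := by
  induction N using Nat.strong_induction_on with
  | _ N ih =>
    rcases N with _ | N
    · simp [Zpart_zero]
    · simp_rw [Zpart_succ]
      exact Finset.measurable_sum _ fun j hj =>
        ((ih j (Finset.mem_range.mp hj)).mul_const _).mul (measurable_cw lam h _ _)

theorem dependsOn_Zpart (N : ℕ) : DependsOn (fun ω => Zpart K lam h ω N) (Finset.Icc 1 N) := by
  induction N using Nat.strong_induction_on with
  | _ N ih =>
    rcases N with _ | N
    · intro ω ω' _
      simp [Zpart_zero]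
    · intro ω ω' hω
      simp only [Zpart_succ]
      refine Finset.sum_congr rfl fun j hj => ?_
      have hj := Finset.mem_range.mp hj
      have hZ := (ih j hj).mono (Finset.coe_subset.mpr (Finset.Icc_subset_Icc_right hj.le)) hω
      have hw := (dependsOn_cw lam h j (N + 1)).mono
        (Finset.coe_subset.mpr (Finset.Icc_subset_Icc_left (by omega))) hω
      rw [hZ, hw]

end PartitionFunction

namespace IsGaussianDisorder

variable {P : Measure (ℕ → ℝ)} (K : ℕ → ℝ) (lam h : ℝ)

theorem mgf_sum (hP : IsGaussianDisorder P) (s : Finset ℕ) (t : ℝ) :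
    mgf (fun ω => ∑ i ∈ s, ω i) P t = Real.exp (#s * (t ^ 2 / 2)) := by
  have := hP.2.1.mgf_sum (t := t) measurable_pi_apply s
  simp only [Finset.sum_fn] at this
  rw [this, Finset.prod_congr rfl fun i _ => mgf_gaussianReal (hP.2.2 i) t, Finset.prod_const,
    ← Real.exp_nat_mul]
  simp

theorem integrable_exp_mul_sum (hP : IsGaussianDisorder P) (s : Finset ℕ) (t : ℝ) :
    Integrable (fun ω => Real.exp (t * ∑ i ∈ s, ω i)) P := by
  have := hP.1
  rw [← mgf_pos_iff, hP.mgf_sum]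
  exact Real.exp_pos _

theorem integrable_cw (hP : IsGaussianDisorder P) (a b : ℕ) :
    Integrable (fun ω => cw lam h ω a b) P := by
  have := hP.1
  simp_rw [cw_eq]
  exact ((integrable_const 1).add ((hP.integrable_exp_mul_sum _ _).const_mul _)).div_const 2

theorem integral_cw (hP : IsGaussianDisorder P) {a b : ℕ} (hab : a ≤ b) :
    ∫ ω, cw lam h ω a b ∂P = (1 + Real.exp (2 * lam * (lam - h) * ((b - a : ℕ) : ℝ))) / 2 := by
  have := hP.1
  have hmgf := hP.mgf_sum (Finset.Icc (a + 1) b) (-(2 * lam))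
  rw [mgf, Nat.card_Icc, Nat.add_sub_add_right] at hmgf
  simp_rw [cw_eq]
  rw [integral_div,
    integral_add (integrable_const 1) ((hP.integrable_exp_mul_sum _ _).const_mul _),
    integral_const_mul, hmgf, integral_const, probReal_univ, one_smul, ← Real.exp_add,
    Nat.cast_sub hab]
  ring_nf

theorem indepFun_Zpart_cw (hP : IsGaussianDisorder P) (j b : ℕ) :
    IndepFun (fun ω => Zpart K lam h ω j) (fun ω => cw lam h ω j b) P :=
  hP.2.1.indepFun_of_dependsOn
    (Finset.disjoint_left.mpr fun i hi hi' => by simp only [Finset.mem_Icc] at hi hi'; omega)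
    (measurable_Zpart K lam h j) (measurable_cw lam h j b)
    (dependsOn_Zpart K lam h j) (dependsOn_cw lam h j b)

theorem integrable_Zpart (hP : IsGaussianDisorder P) (N : ℕ) :
    Integrable (fun ω => Zpart K lam h ω N) P := by
  have := hP.1
  induction N using Nat.strong_induction_on with
  | _ N ih =>
    rcases N with _ | N
    · simp [Zpart_zero]
    · simp_rw [Zpart_succ, mul_right_comm _ (K _)]
      exact integrable_finsetSum _ fun j hj =>
        ((hP.indepFun_Zpart_cw K lam h j (N + 1)).integrable_mul (ih j (Finset.mem_range.mp hj))
          (hP.integrable_cw lam h j (N + 1))).mul_const _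

theorem integral_Zpart_zero (hP : IsGaussianDisorder P) : ∫ ω, Zpart K lam h ω 0 ∂P = 1 := by
  have := hP.1
  simp [Zpart_zero]

theorem integral_Zpart_succ (hP : IsGaussianDisorder P) (N : ℕ) :
    ∫ ω, Zpart K lam h ω (N + 1) ∂P =
      ∑ j ∈ Finset.range (N + 1), (∫ ω, Zpart K lam h ω j ∂P) * K (N + 1 - j) *
        ((1 + Real.exp (2 * lam * (lam - h) * ((N + 1 - j : ℕ) : ℝ))) / 2) := by
  have hindep j := hP.indepFun_Zpart_cw K lam h j (N + 1)
  have hint j :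
      Integrable (fun ω => Zpart K lam h ω j * cw lam h ω j (N + 1) * K (N + 1 - j)) P :=
    ((hindep j).integrable_mul (hP.integrable_Zpart K lam h j)
      (hP.integrable_cw lam h j (N + 1))).mul_const _
  simp_rw [Zpart_succ, mul_right_comm (Zpart _ _ _ _ _)]
  rw [integral_finsetSum _ fun j _ => hint j]
  refine Finset.sum_congr rfl fun j hj => ?_
  rw [integral_mul_const, (hindep j).integral_fun_mul_eq_mul_integral
    (hP.integrable_Zpart K lam h j).aestronglyMeasurable
    (hP.integrable_cw lam h j (N + 1)).aestronglyMeasurable,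
    hP.integral_cw lam h (Finset.mem_range.mp hj).le]
  ring

theorem integral_Zpart_le (hP : IsGaussianDisorder P) (hK : ∀ n, 0 ≤ K n) (hKsum : HasSum K 1)
    (N : ℕ) :
    ∫ ω, Zpart K lam h ω N ∂P ≤ Real.exp (max (2 * lam * (lam - h)) 0 * N) :=
  le_exp_mul_of_renewal (A := fun N => ∫ ω, Zpart K lam h ω N ∂P) hK hKsum
    (fun _ => by positivity)
    (fun n => one_add_exp_div_two_le_exp_max _ n.cast_nonneg)
    (hP.integral_Zpart_zero K lam h).le (hP.integral_Zpart_succ K lam h) N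

theorem half_mul_exp_le_integral_Zpart (hP : IsGaussianDisorder P) (hK : ∀ n, 0 ≤ K n)
    (N : ℕ) :
    K (N + 1) / 2 * Real.exp (max (2 * lam * (lam - h)) 0 * ↑(N + 1)) ≤
      ∫ ω, Zpart K lam h ω (N + 1) ∂P := by
  have hterm_nonneg : ∀ j ∈ Finset.range (N + 1), 0 ≤ (∫ ω, Zpart K lam h ω j ∂P) *
      K (N + 1 - j) * ((1 + Real.exp (2 * lam * (lam - h) * ((N + 1 - j : ℕ) : ℝ))) / 2) :=
    fun j _ => mul_nonneg (mul_nonneg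
      (integral_nonneg fun ω => Zpart_nonneg K lam h hK ω j) (hK _)) (by positivity)
  have hfirst := Finset.single_le_sum hterm_nonneg (Finset.mem_range.mpr N.succ_pos)
  rw [hP.integral_Zpart_zero, one_mul, Nat.sub_zero] at hfirst
  rw [hP.integral_Zpart_succ]
  calc K (N + 1) / 2 * Real.exp (max (2 * lam * (lam - h)) 0 * ↑(N + 1))
      = K (N + 1) * (Real.exp (max (2 * lam * (lam - h)) 0 * ↑(N + 1)) / 2) := by ring
    _ ≤ K (N + 1) * ((1 + Real.exp (2 * lam * (lam - h) * ↑(N + 1))) / 2) :=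
        mul_le_mul_of_nonneg_left (exp_max_div_two_le_one_add_exp _ _) (hK _)
    _ ≤ _ := hfirst

end IsGaussianDisorder

theorem annealed_free_energy_general
    (K : ℕ → ℝ) (α CK : ℝ) (hCK : 0 < CK)
    (hKnn : ∀ n, 0 ≤ K n) (hKsum : HasSum K 1)
    (hTail : Tendsto (fun n : ℕ => (n : ℝ) ^ (1 + α) * K n) atTop (nhds CK))
    (P : Measure (ℕ → ℝ)) (hP : IsGaussianDisorder P)
    (lam h : ℝ) (hlam : 0 ≤ lam) :
    Tendsto (fun N : ℕ => ((N : ℝ))⁻¹ * Real.log (∫ ω, Zpart K lam h ω N ∂P))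
      atTop (nhds (if h < lam then 2 * lam * (lam - h) else 0)) := by
  have hlimit : (if h < lam then 2 * lam * (lam - h) else 0) = max (2 * lam * (lam - h)) 0 := by
    split_ifs with hlt
    · exact (max_eq_left (by nlinarith)).symm
    · exact (max_eq_right (by nlinarith)).symm
  have hTail_half : Tendsto (fun n : ℕ => (n : ℝ) ^ (1 + α) * (K n / 2)) atTop (nhds (CK / 2)) := by
    simpa only [mul_div_assoc] using hTail.div_const 2
  rw [hlimit]
  refine tendsto_inv_mul_log_of_le_of_le
    (tendsto_inv_mul_log_of_tendsto_rpow_mul (half_pos hCK) hTail_half)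
    (eventually_pos_of_tendsto_rpow_mul (half_pos hCK) hTail_half) ?_
    (Eventually.of_forall (hP.integral_Zpart_le K lam h hKnn hKsum))
  filter_upwards [eventually_gt_atTop 0] with N hN
  obtain ⟨M, rfl⟩ := Nat.exists_eq_succ_of_ne_zero hN.ne'
  exact hP.half_mul_exp_le_integral_Zpart K lam h hKnn M

/-- the annealed free energy exists and equals
`2λ(λ-h)` if `h < λ` and `0` if `h ≥ λ`. -/
theorem annealed_free_energy
    (K : ℕ → ℝ) (α CK : ℝ) (hα : 0 < α) (hCK : 0 < CK)
    (hK0 : K 0 = 0) (hKnn : ∀ n, 0 ≤ K n) (hKsum : HasSum K 1)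
    (hTail : Tendsto (fun n : ℕ => (n : ℝ) ^ (1 + α) * K n) atTop (nhds CK))
    (P : Measure (ℕ → ℝ)) (hP : IsGaussianDisorder P)
    (lam h : ℝ) (hlam : 0 ≤ lam) (hh : 0 ≤ h) :
    Tendsto (fun N : ℕ => ((N : ℝ))⁻¹ * Real.log (∫ ω, Zpart K lam h ω N ∂P))
      atTop (nhds (if h < lam then 2 * lam * (lam - h) else 0)) :=
  annealed_free_energy_general K α CK hCK hKnn hKsum hTail P hP lam h hlam
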